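/- Let T be a finite tree and v a vertex of T. Then 3(N_T R_v − N_v R_T) ≥ N_T² − N_v N_T. -/

import Mathlib

variable {V : Type*}

/-- A subtree of a graph: a nonempty set of vertices inducing a connected subgraph. -/
def IsSubtree (G : SimpleGraph V) (s : Finset V) : Prop :=
  s.Nonempty ∧ (G.induce (s : Set V)).Connected

open Classical in
/-- `N_T`: the number of subtrees of `G`. -/
noncomputable def numSubtrees [Fintype V] (G : SimpleGraph V) : ℕ :=
  (Finset.univ.filter fun s : Finset V => IsSubtree G s).card

open Classical in
/-- `R_T`: the sum of the orders of all subtrees of `G`. -/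
noncomputable def sumSubtrees [Fintype V] (G : SimpleGraph V) : ℕ :=
  ∑ s ∈ Finset.univ.filter (fun s : Finset V => IsSubtree G s), s.card

open Classical in
/-- `N_v`: the number of subtrees of `G` containing `v`. -/
noncomputable def numSubtreesAt [Fintype V] (G : SimpleGraph V) (v : V) : ℕ :=
  (Finset.univ.filter fun s : Finset V => IsSubtree G s ∧ v ∈ s).card

open Classical in
/-- `R_v`: the sum of the orders of all subtrees of `G` containing `v`. -/
noncomputable def sumSubtreesAt [Fintype V] (G : SimpleGraph V) (v : V) : ℕ :=
  ∑ s ∈ Finset.univ.filter (fun s : Finset V => IsSubtree G s ∧ v ∈ s), s.card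

/-- `μ_T`: the mean subtree order (global mean) of `G`. -/
noncomputable def meanSubtreeOrder [Fintype V] (G : SimpleGraph V) : ℚ :=
  (sumSubtrees G : ℚ) / (numSubtrees G : ℚ)

/-- `μ_T(v)`: the local mean of `G` at `v`. -/
noncomputable def localMean [Fintype V] (G : SimpleGraph V) (v : V) : ℚ :=
  (sumSubtreesAt G v : ℚ) / (numSubtreesAt G v : ℚ)

/-- The tree obtained by contracting the edge `uv`: the vertex `v` is merged into `u`. -/
def contractEdge (G : SimpleGraph V) (u v : V) : SimpleGraph {x : V // x ≠ v} where
  Adj a b := a ≠ b ∧ (G.Adj a.1 b.1 ∨ (a.1 = u ∧ G.Adj v b.1) ∨ (b.1 = u ∧ G.Adj v a.1))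
  symm := by
    refine ⟨?_⟩
    rintro a b ⟨hne, h⟩
    refine ⟨hne.symm, ?_⟩
    rcases h with h | h | h
    · exact Or.inl h.symm
    · exact Or.inr (Or.inr h)
    · exact Or.inr (Or.inl h)
  loopless := by refine ⟨?_⟩; rintro a ⟨hne, -⟩; exact hne rfl

/-!
Attach to a subtree `A` of the tree and a vertex `v ∈ A` the four numbers `(N, R, N_v, R_v)`
computed inside `A`. If `v` is a leaf of `A` with neighbour `u`, these are explicit polynomials
in the numbers of `(A - v, u)`; otherwise `v` cuts `A` into two smaller subtrees meeting only in
`v`, the subtrees through `v` are exactly the unions of subtrees through `v` of the two parts, and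
the numbers of `(A, v)` are again explicit polynomials in those of the parts. The inequality alone
does not survive these two operations, but together with six companion bounds (`Bounded`) it
does, and strong induction on `A` gives it for the whole tree.
-/

open Finset SimpleGraph

section Connectivity

variable {G : SimpleGraph V} {s t : Finset V} {v w : V}

theorem IsSubtree.exists_walk (hs : IsSubtree G s) {x y : V} (hx : x ∈ s) (hy : y ∈ s) :
    ∃ p : G.Walk x y, ∀ z ∈ p.support, z ∈ s := by
  obtain ⟨p⟩ := hs.2.preconnected ⟨x, hx⟩ ⟨y, hy⟩
  refine ⟨p.map (Embedding.induce (s : Set V)).toHom, fun z hz => ?_⟩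
  change z ∈ (p.map (Embedding.induce (s : Set V)).toHom).support at hz
  rw [Walk.support_map, List.mem_map] at hz
  obtain ⟨⟨z, hz⟩, -, rfl⟩ := hz
  exact hz

theorem isSubtree_of_forall_walk (hv : v ∈ s)
    (h : ∀ z ∈ s, ∃ p : G.Walk v z, ∀ t ∈ p.support, t ∈ s) : IsSubtree G s := by
  refine ⟨⟨v, hv⟩, G.induce_connected_of_patches v hv fun {z} hz => ?_⟩
  obtain ⟨p, hp⟩ := h z hz
  exact ⟨_, hp, p.start_mem_support, p.end_mem_support, p.connected_induce_support.preconnected _ _⟩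

theorem isSubtree_singleton (v : V) : IsSubtree G {v} :=
  isSubtree_of_forall_walk (mem_singleton_self v) fun z hz => by
    rw [mem_singleton.1 hz]
    exact ⟨.nil, by simp⟩

variable [DecidableEq V]

theorem IsSubtree.union (hs : IsSubtree G s) (ht : IsSubtree G t) (hvs : v ∈ s) (hvt : v ∈ t) :
    IsSubtree G (s ∪ t) := by
  refine ⟨⟨v, mem_union_left t hvs⟩, ?_⟩
  rw [coe_union]
  exact G.induce_union_connected hs.2.preconnected ht.2.preconnected ⟨v, hvs, hvt⟩

theorem IsSubtree.insert_of_adj (hs : IsSubtree G s) (hw : w ∈ s) (hvw : G.Adj v w) :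
    IsSubtree G (insert v s) := by
  refine isSubtree_of_forall_walk (mem_insert_of_mem hw) fun z hz => ?_
  rcases mem_insert.1 hz with rfl | hz
  · exact ⟨hvw.symm.toWalk, by simp [hw]⟩
  · obtain ⟨p, hp⟩ := hs.exists_walk hw hz
    exact ⟨p, fun t ht => mem_insert_of_mem (hp t ht)⟩

/-- A path inside `s` starting at `v` never comes back to `v`. -/
theorem IsSubtree.exists_adj_walk_erase (hs : IsSubtree G s) (hv : v ∈ s) {z : V}
    (hz : z ∈ s.erase v) : ∃ b, G.Adj v b ∧ ∃ p : G.Walk b z, ∀ t ∈ p.support, t ∈ s.erase v := by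
  obtain ⟨p, hp⟩ := hs.exists_walk hv (mem_of_mem_erase hz)
  obtain ⟨q, hq, hqp⟩ : ∃ q : G.Walk v z, q.IsPath ∧ q.support ⊆ p.support :=
    ⟨p.bypass, p.bypass_isPath, p.support_bypass_subset_support⟩
  cases q with
  | nil => simp at hz
  | cons hvb q =>
    rw [Walk.cons_isPath_iff] at hq
    refine ⟨_, hvb, q, fun t ht => mem_erase.2 ⟨fun htv => hq.2 (htv ▸ ht), hp t (hqp ?_)⟩⟩
    simp [ht]

theorem IsSubtree.mem_erase_of_forall_adj_eq (hs : IsSubtree G s) (hv : v ∈ s)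
    (huniq : ∀ x ∈ s, G.Adj v x → x = w) (hne : (s.erase v).Nonempty) : w ∈ s.erase v := by
  obtain ⟨z, hz⟩ := hne
  obtain ⟨b, hvb, p, hp⟩ := hs.exists_adj_walk_erase hv hz
  obtain rfl := huniq b (mem_of_mem_erase (hp b p.start_mem_support)) hvb
  exact hp b p.start_mem_support

theorem IsSubtree.erase_of_forall_adj_eq (hs : IsSubtree G s) (hv : v ∈ s)
    (huniq : ∀ x ∈ s, G.Adj v x → x = w) (hne : (s.erase v).Nonempty) :
    IsSubtree G (s.erase v) := by
  refine isSubtree_of_forall_walk (hs.mem_erase_of_forall_adj_eq hv huniq hne) fun z hz => ?_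
  obtain ⟨b, hvb, p, hp⟩ := hs.exists_adj_walk_erase hv hz
  obtain rfl := huniq b (mem_of_mem_erase (hp b p.start_mem_support)) hvb
  exact ⟨p, hp⟩

end Connectivity

/-- Otherwise the edge `vu` would not be a bridge. -/
theorem SimpleGraph.IsAcyclic.mem_support_of_adj {G : SimpleGraph V} (hG : G.IsAcyclic)
    {u v w : V} (hvu : G.Adj v u) (hvw : G.Adj v w) (hwu : w ≠ u) (p : G.Walk u w) :
    v ∈ p.support := by
  have hbridge := isBridge_iff_forall_walk_mem_edges.1
    (isAcyclic_iff_forall_adj_isBridge.1 hG hvu) (.cons hvw p.reverse)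
  rw [Walk.edges_cons, List.mem_cons, Walk.edges_reverse, List.mem_reverse] at hbridge
  rcases hbridge with h | h
  · exact absurd (Sym2.congr_right.1 h).symm hwu
  · exact p.fst_mem_support_of_mem_edges h

section Closed

variable {G : SimpleGraph V} {s K L S T : Finset V} {u v : V}

def IsClosedIn (G : SimpleGraph V) (K S : Finset V) : Prop :=
  ∀ x ∈ K, ∀ y ∈ S, G.Adj x y → y ∈ K

theorem IsClosedIn.support_subset (hK : IsClosedIn G K S) {x y : V} (p : G.Walk x y)
    (hp : ∀ t ∈ p.support, t ∈ S) (hx : x ∈ K) : ∀ t ∈ p.support, t ∈ K := by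
  induction p with
  | nil => simpa using hx
  | cons hxy p ih =>
    simp only [Walk.support_cons, List.mem_cons, forall_eq_or_imp] at hp ⊢
    exact ⟨hx, ih hp.2 (hK _ hx _ (hp.2 _ p.start_mem_support) hxy)⟩

theorem IsSubtree.subset_or_subset_sdiff [DecidableEq V] (hs : IsSubtree G s) (hsS : s ⊆ S)
    (hK : IsClosedIn G K S) : s ⊆ K ∨ s ⊆ S \ K := by
  by_cases h : ∃ a ∈ s, a ∈ K
  · obtain ⟨a, has, haK⟩ := h
    refine Or.inl fun b hb => ?_
    obtain ⟨p, hp⟩ := hs.exists_walk has hb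
    exact hK.support_subset p (fun t ht => hsS (hp t ht)) haK b p.end_mem_support
  · push Not at h
    exact Or.inr fun z hz => mem_sdiff.2 ⟨hsS hz, h z hz⟩

open Classical in
noncomputable def componentIn (G : SimpleGraph V) (S : Finset V) (u : V) : Finset V :=
  S.filter fun y => ∃ p : G.Walk u y, ∀ t ∈ p.support, t ∈ S

theorem mem_componentIn {x : V} :
    x ∈ componentIn G S u ↔ x ∈ S ∧ ∃ p : G.Walk u x, ∀ t ∈ p.support, t ∈ S := by
  simp [componentIn]

theorem componentIn_subset : componentIn G S u ⊆ S := fun _ hx => (mem_componentIn.1 hx).1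

theorem self_mem_componentIn (hu : u ∈ S) : u ∈ componentIn G S u :=
  mem_componentIn.2 ⟨hu, .nil, by simpa using hu⟩

theorem isClosedIn_componentIn : IsClosedIn G (componentIn G S u) S := by
  intro x hx y hy hxy
  obtain ⟨-, p, hp⟩ := mem_componentIn.1 hx
  refine mem_componentIn.2 ⟨hy, p.concat hxy, fun t ht => ?_⟩
  rw [Walk.support_concat, List.mem_append, List.mem_singleton] at ht
  rcases ht with ht | rfl
  · exact hp t ht
  · exact hy

variable [DecidableEq V]

theorem notMem_componentIn_erase (hG : G.IsAcyclic) {w : V} (hvu : G.Adj v u)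
    (hvw : G.Adj v w) (hwu : w ≠ u) : w ∉ componentIn G (S.erase v) u := by
  intro hw
  obtain ⟨-, p, hp⟩ := mem_componentIn.1 hw
  exact (mem_erase.1 (hp v (hG.mem_support_of_adj hvu hvw hwu p))).1 rfl

theorem IsClosedIn.sdiff (hK : IsClosedIn G K S) : IsClosedIn G (S \ K) S := by
  intro x hx y hy hxy
  rw [mem_sdiff] at hx ⊢
  exact ⟨hy, fun hyK => hx.2 (hK y hyK x hx.1 hxy.symm)⟩

theorem IsClosedIn.inter_of_subset (hK : IsClosedIn G K S) (hT : T ⊆ S) :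
    IsClosedIn G (T ∩ K) T := by
  intro x hx y hy hxy
  rw [mem_inter] at hx ⊢
  exact ⟨hy, hK x hx.2 y (hT hy) hxy⟩

theorem IsSubtree.insert_of_isClosedIn (hs : IsSubtree G s) (hv : v ∈ s) (hL : L ⊆ s.erase v)
    (hcl : IsClosedIn G L (s.erase v)) : IsSubtree G (insert v L) := by
  refine isSubtree_of_forall_walk (mem_insert_self v L) fun z hz => ?_
  rcases mem_insert.1 hz with rfl | hz
  · exact ⟨.nil, by simp⟩
  · obtain ⟨b, hvb, p, hp⟩ := hs.exists_adj_walk_erase hv (hL hz)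
    have hpL := hcl.support_subset p.reverse (by simpa using hp) hz
    refine ⟨.cons hvb p, fun t ht => ?_⟩
    rw [Walk.support_cons, List.mem_cons] at ht
    rcases ht with rfl | ht
    · exact mem_insert_self t L
    · exact mem_insert_of_mem (hpL t (by simpa using ht))

end Closed

section Families

variable {G : SimpleGraph V} {A K S s : Finset V} {v w : V}

open Classical in
noncomputable def subtreesIn (G : SimpleGraph V) (A : Finset V) : Finset (Finset V) :=
  A.powerset.filter (IsSubtree G)

open Classical in
noncomputable def rootedSubtreesIn (G : SimpleGraph V) (A : Finset V) (v : V) :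
    Finset (Finset V) :=
  (subtreesIn G A).filter (v ∈ ·)

@[simp]
theorem mem_subtreesIn : s ∈ subtreesIn G A ↔ s ⊆ A ∧ IsSubtree G s := by
  simp [subtreesIn]

@[simp]
theorem mem_rootedSubtreesIn :
    s ∈ rootedSubtreesIn G A v ↔ s ⊆ A ∧ IsSubtree G s ∧ v ∈ s := by
  simp [rootedSubtreesIn, and_assoc]

theorem subtreesIn_singleton : subtreesIn G {v} = {{v}} := by
  ext s
  rw [mem_subtreesIn, subset_singleton_iff, mem_singleton]
  constructor
  · rintro ⟨rfl | rfl, hs⟩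
    · exact absurd hs.1 not_nonempty_empty
    · rfl
  · rintro rfl
    exact ⟨Or.inr rfl, isSubtree_singleton v⟩

theorem rootedSubtreesIn_singleton : rootedSubtreesIn G {v} v = {{v}} := by
  rw [rootedSubtreesIn, subtreesIn_singleton]
  simp

variable [DecidableEq V] {β : Type*} [AddCommMonoid β] (f : Finset V → β)

theorem sum_subtreesIn_eq_sum_rootedSubtreesIn_add (A : Finset V) (v : V) :
    ∑ s ∈ subtreesIn G A, f s =
      ∑ s ∈ rootedSubtreesIn G A v, f s + ∑ s ∈ subtreesIn G (A.erase v), f s := by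
  classical
  rw [← sum_filter_add_sum_filter_not (subtreesIn G A) (v ∈ ·)]
  congr 1
  · exact sum_congr (by ext; simp [and_assoc]) fun _ _ => rfl
  · exact sum_congr (by ext; simp [subset_erase]; tauto) fun _ _ => rfl

theorem sum_subtreesIn_of_isClosedIn (hK : K ⊆ S) (hcl : IsClosedIn G K S) :
    ∑ s ∈ subtreesIn G S, f s = ∑ s ∈ subtreesIn G K, f s + ∑ s ∈ subtreesIn G (S \ K), f s := by
  classical
  rw [← sum_filter_add_sum_filter_not (subtreesIn G S) (· ⊆ K)]
  congr 1
  · refine sum_congr (ext fun s => ?_) fun _ _ => rfl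
    simp only [mem_filter, mem_subtreesIn]
    exact ⟨fun h => ⟨h.2, h.1.2⟩, fun h => ⟨⟨h.1.trans hK, h.2⟩, h.1⟩⟩
  · refine sum_congr (ext fun s => ?_) fun _ _ => rfl
    simp only [mem_filter, mem_subtreesIn]
    constructor
    · rintro ⟨⟨hsS, hs⟩, hsK⟩
      exact ⟨(hs.subset_or_subset_sdiff hsS hcl).resolve_left hsK, hs⟩
    · rintro ⟨hsSK, hs⟩
      obtain ⟨a, ha⟩ := hs.1
      exact ⟨⟨hsSK.trans sdiff_subset, hs⟩, fun hsK => (mem_sdiff.1 (hsSK ha)).2 (hsK ha)⟩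

theorem rootedSubtreesIn_eq_insert_image (hv : v ∈ A) (hvw : G.Adj v w)
    (huniq : ∀ x ∈ A, G.Adj v x → x = w) :
    rootedSubtreesIn G A v = insert {v} ((rootedSubtreesIn G (A.erase v) w).image (insert v)) := by
  ext s
  simp only [mem_insert, mem_image, mem_rootedSubtreesIn]
  constructor
  · rintro ⟨hsA, hs, hvs⟩
    rcases (s.erase v).eq_empty_or_nonempty with he | hne
    · exact Or.inl (by rw [← insert_erase hvs, he]; rfl)
    · have huniq' : ∀ x ∈ s, G.Adj v x → x = w := fun x hx => huniq x (hsA hx)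
      exact Or.inr ⟨s.erase v, ⟨erase_subset_erase v hsA, hs.erase_of_forall_adj_eq hvs huniq' hne,
        hs.mem_erase_of_forall_adj_eq hvs huniq' hne⟩, insert_erase hvs⟩
  · rintro (rfl | ⟨s, ⟨hsA, hs, hws⟩, rfl⟩)
    · exact ⟨singleton_subset_iff.2 hv, isSubtree_singleton v, mem_singleton_self v⟩
    · exact ⟨insert_subset hv (hsA.trans (erase_subset v A)), hs.insert_of_adj hws hvw,
        mem_insert_self v s⟩

theorem sum_rootedSubtreesIn_of_forall_adj_eq (hv : v ∈ A) (hvw : G.Adj v w)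
    (huniq : ∀ x ∈ A, G.Adj v x → x = w) :
    ∑ s ∈ rootedSubtreesIn G A v, f s =
      f {v} + ∑ s ∈ rootedSubtreesIn G (A.erase v) w, f (insert v s) := by
  have hvs : ∀ s ∈ rootedSubtreesIn G (A.erase v) w, v ∉ s := fun s hs hvs =>
    (mem_erase.1 ((mem_rootedSubtreesIn.1 hs).1 hvs)).1 rfl
  rw [rootedSubtreesIn_eq_insert_image hv hvw huniq, sum_insert, sum_image]
  · intro s hs t ht hst
    rw [← erase_insert (hvs s hs), ← erase_insert (hvs t ht), hst]
  · simp only [mem_image, not_exists, not_and]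
    intro s hs hsv
    have hws : w ∈ insert v s := mem_insert_of_mem (mem_rootedSubtreesIn.1 hs).2.2
    rw [hsv, mem_singleton] at hws
    exact hvw.ne' hws

theorem inter_insert_mem_rootedSubtreesIn (hs : s ∈ rootedSubtreesIn G A v)
    (hcl : IsClosedIn G K (A.erase v)) : s ∩ insert v K ∈ rootedSubtreesIn G (insert v K) v := by
  rw [mem_rootedSubtreesIn] at hs ⊢
  obtain ⟨hsA, hs, hvs⟩ := hs
  have heq : s ∩ insert v K = insert v (s.erase v ∩ K) := by
    ext z
    simp only [mem_inter, mem_insert, mem_erase]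
    grind
  refine ⟨inter_subset_right, ?_, by simp [hvs]⟩
  rw [heq]
  exact hs.insert_of_isClosedIn hvs inter_subset_left
    (hcl.inter_of_subset (erase_subset_erase v hsA))

theorem sum_rootedSubtreesIn_eq_sum_product (hv : v ∈ A) (hK : K ⊆ A.erase v)
    (hcl : IsClosedIn G K (A.erase v)) :
    ∑ s ∈ rootedSubtreesIn G A v, f s =
      ∑ p ∈ rootedSubtreesIn G (insert v K) v ×ˢ rootedSubtreesIn G (insert v (A.erase v \ K)) v,
        f (p.1 ∪ p.2) := by
  symm
  refine sum_nbij' (fun p => p.1 ∪ p.2) (fun s => (s ∩ insert v K, s ∩ insert v (A.erase v \ K)))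
    ?_ ?_ ?_ ?_ fun _ _ => rfl
  · rintro ⟨s₁, s₂⟩ hp
    simp only [mem_product, mem_rootedSubtreesIn] at hp ⊢
    obtain ⟨⟨hs₁A, hs₁, hvs₁⟩, hs₂A, hs₂, hvs₂⟩ := hp
    refine ⟨union_subset ?_ ?_, hs₁.union hs₂ hvs₁ hvs₂, mem_union_left _ hvs₁⟩
    · exact hs₁A.trans (insert_subset hv (hK.trans (erase_subset v A)))
    · exact hs₂A.trans (insert_subset hv (sdiff_subset.trans (erase_subset v A)))
  · intro s hs
    rw [mem_product]
    exact ⟨inter_insert_mem_rootedSubtreesIn hs hcl, inter_insert_mem_rootedSubtreesIn hs hcl.sdiff⟩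
  · rintro ⟨s₁, s₂⟩ hp
    simp only [mem_product, mem_rootedSubtreesIn] at hp
    obtain ⟨⟨hs₁A, -, hvs₁⟩, hs₂A, -, hvs₂⟩ := hp
    simp only [Prod.ext_iff, Finset.ext_iff, subset_iff, mem_inter, mem_union, mem_insert,
      mem_sdiff, mem_erase] at *
    grind
  · intro s hs
    have hsA := (mem_rootedSubtreesIn.1 hs).1
    simp only [Finset.ext_iff, subset_iff, mem_inter, mem_union, mem_insert, mem_sdiff,
      mem_erase] at hsA ⊢
    grind

end Families

/-- The numbers `(N, R, N_v, R_v)` of a tree with a distinguished vertex `v`. -/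
@[ext]
structure SubtreeStats where
  n : ℤ
  r : ℤ
  nv : ℤ
  rv : ℤ

namespace SubtreeStats

def vertex : SubtreeStats := ⟨1, 1, 1, 1⟩

/-- Hang the tree from a new vertex joined to `v` only, and make it the distinguished vertex. -/
def addRoot (t : SubtreeStats) : SubtreeStats :=
  ⟨t.n + 1 + t.nv, t.r + 1 + t.rv + t.nv, 1 + t.nv, 1 + t.rv + t.nv⟩

/-- Identify the distinguished vertices of two trees. -/
def glue (s t : SubtreeStats) : SubtreeStats where
  n := s.nv * t.nv + (s.n - s.nv) + (t.n - t.nv)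
  r := s.rv * t.nv + s.nv * t.rv - s.nv * t.nv + (s.r - s.rv) + (t.r - t.rv)
  nv := s.nv * t.nv
  rv := s.rv * t.nv + s.nv * t.rv - s.nv * t.nv

structure Bounded (t : SubtreeStats) : Prop where
  one_le_nv : 1 ≤ t.nv
  nv_le_n : t.nv ≤ t.n
  key : t.n * (t.n - t.nv) ≤ 3 * (t.n * t.rv - t.nv * t.r)
  three_r_le : 3 * t.r ≤ (t.nv + 2) * t.n
  three_rv_le : 3 * t.rv ≤ t.nv ^ 2 + t.nv + t.n
  le_three_rv : t.nv + 2 * t.n ≤ 3 * t.rv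
  n_le_nv_sq : t.n ≤ t.nv ^ 2

theorem bounded_vertex : vertex.Bounded := by
  constructor <;> norm_num [vertex]

theorem Bounded.addRoot {t : SubtreeStats} (h : t.Bounded) : t.addRoot.Bounded := by
  cases h
  constructor <;> dsimp only [SubtreeStats.addRoot]
  · linarith
  · linarith
  · nlinarith [sq_nonneg (t.n - t.nv), sq_nonneg t.nv]
  · nlinarith
  · nlinarith
  · nlinarith
  · nlinarith

set_option maxHeartbeats 1000000 in
theorem Bounded.glue {s t : SubtreeStats} (hs : s.Bounded) (ht : t.Bounded) :
    (s.glue t).Bounded := by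
  obtain ⟨n₁, r₁, x, ρ₁⟩ := s
  obtain ⟨n₂, r₂, y, ρ₂⟩ := t
  obtain ⟨hx, hxn, key₁, hr₁, hρ₁, hρ₁', hn₁⟩ := hs
  obtain ⟨hy, hyn, key₂, hr₂, hρ₂, hρ₂', hn₂⟩ := ht
  dsimp only at *
  have hp : 0 ≤ n₁ - x := by linarith
  have hq : 0 ≤ n₂ - y := by linarith
  have hx0 : 0 ≤ x := by linarith
  have hy0 : 0 ≤ y := by linarith
  have hx1 : 0 ≤ x - 1 := by linarith
  have hy1 : 0 ≤ y - 1 := by linarith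
  have hpn : n₁ - x ≤ x * (x - 1) := by nlinarith
  have hqn : n₂ - y ≤ y * (y - 1) := by nlinarith
  have hxy : 0 ≤ (x - 1) * (y - 1) := mul_nonneg hx1 hy1
  -- integrality: `m (m - 1) ≥ 0` for every integer `m`
  have hxy' : 0 ≤ (x - 1) * (y - 1) * ((x - 1) * (y - 1) - 1) := by
    rcases hxy.eq_or_lt with h | h
    · rw [← h, zero_mul]
    · exact mul_nonneg hxy (by linarith [Int.add_one_le_of_lt h])
  constructor <;> dsimp only [SubtreeStats.glue]
  · nlinarith
  · nlinarith
  · nlinarith [mul_le_mul_of_nonneg_right key₁ hy0, mul_le_mul_of_nonneg_right key₂ hx0,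
      mul_le_mul_of_nonneg_right hρ₁' (mul_nonneg hy0 hq),
      mul_le_mul_of_nonneg_right hρ₂' (mul_nonneg hx0 hp),
      mul_nonneg hy1 (mul_nonneg hp hp), mul_nonneg hx1 (mul_nonneg hq hq),
      mul_nonneg (mul_nonneg hp hq) (by linarith : 0 ≤ x + y - 1)]
  · nlinarith [mul_le_mul_of_nonneg_right hρ₁ hy1, mul_le_mul_of_nonneg_right hρ₂ hx1,
      mul_nonneg (mul_nonneg hx0 hy0) hxy, mul_nonneg hxy hp, mul_nonneg hxy hq]
  · nlinarith [mul_le_mul_of_nonneg_right hρ₁ hy0, mul_le_mul_of_nonneg_right hρ₂ hx0,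
      mul_le_mul_of_nonneg_right hpn hy1, mul_le_mul_of_nonneg_right hqn hx1]
  · nlinarith [mul_le_mul_of_nonneg_right hρ₁' hy0, mul_le_mul_of_nonneg_right hρ₂' hx0,
      mul_nonneg hp hy1, mul_nonneg hq hx1]
  · nlinarith [mul_nonneg (by nlinarith : 0 ≤ x + y + x * y) hxy]

end SubtreeStats

section Stats

variable {G : SimpleGraph V} {A K : Finset V} {v w : V}

noncomputable def subtreeStats (G : SimpleGraph V) (A : Finset V) (v : V) : SubtreeStats where
  n := #(subtreesIn G A)
  r := ∑ s ∈ subtreesIn G A, (#s : ℤ)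
  nv := #(rootedSubtreesIn G A v)
  rv := ∑ s ∈ rootedSubtreesIn G A v, (#s : ℤ)

theorem subtreeStats_singleton : subtreeStats G {v} v = .vertex := by
  simp [subtreeStats, SubtreeStats.vertex, subtreesIn_singleton, rootedSubtreesIn_singleton]

theorem subtreeStats_univ [Fintype V] (G : SimpleGraph V) (v : V) :
    subtreeStats G univ v =
      ⟨numSubtrees G, sumSubtrees G, numSubtreesAt G v, sumSubtreesAt G v⟩ := by
  classical
  have hT : subtreesIn G univ = univ.filter fun s => IsSubtree G s := by ext; simp
  have hTv : rootedSubtreesIn G univ v = univ.filter fun s => IsSubtree G s ∧ v ∈ s := by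
    ext; simp
  simp [subtreeStats, numSubtrees, sumSubtrees, numSubtreesAt, sumSubtreesAt, hT, hTv]

variable [DecidableEq V]

theorem subtreeStats_of_forall_adj_eq (hv : v ∈ A) (hvw : G.Adj v w)
    (huniq : ∀ x ∈ A, G.Adj v x → x = w) :
    subtreeStats G A v = (subtreeStats G (A.erase v) w).addRoot := by
  have hcard : ∑ s ∈ rootedSubtreesIn G (A.erase v) w, (#(insert v s) : ℤ) =
      ∑ s ∈ rootedSubtreesIn G (A.erase v) w, ((#s : ℤ) + 1) := by
    refine sum_congr rfl fun s hs => ?_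
    have hvs : v ∉ s := fun hvs => (mem_erase.1 ((mem_rootedSubtreesIn.1 hs).1 hvs)).1 rfl
    rw [card_insert_of_notMem hvs, Nat.cast_succ]
  have hN := sum_subtreesIn_eq_sum_rootedSubtreesIn_add (G := G) (fun _ => (1 : ℤ)) A v
  have hR := sum_subtreesIn_eq_sum_rootedSubtreesIn_add (G := G) (fun s => (#s : ℤ)) A v
  have hNv := sum_rootedSubtreesIn_of_forall_adj_eq (fun _ => (1 : ℤ)) hv hvw huniq
  have hRv := sum_rootedSubtreesIn_of_forall_adj_eq (fun s => (#s : ℤ)) hv hvw huniq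
  simp only [sum_add_distrib, hcard, sum_const, nsmul_eq_mul, mul_one, card_singleton,
    Nat.cast_one] at hN hNv hRv
  ext <;> simp only [subtreeStats, SubtreeStats.addRoot] <;> linarith

theorem sum_subtreesIn_glue {β : Type*} [AddCommGroup β] (f : Finset V → β)
    (hK : K ⊆ A.erase v) (hcl : IsClosedIn G K (A.erase v)) :
    ∑ s ∈ subtreesIn G A, f s = ∑ s ∈ rootedSubtreesIn G A v, f s +
      (∑ s ∈ subtreesIn G (insert v K), f s - ∑ s ∈ rootedSubtreesIn G (insert v K) v, f s) +
      (∑ s ∈ subtreesIn G (insert v (A.erase v \ K)), f s -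
        ∑ s ∈ rootedSubtreesIn G (insert v (A.erase v \ K)) v, f s) := by
  have hvK : v ∉ K := fun h => (mem_erase.1 (hK h)).1 rfl
  have hvK' : v ∉ A.erase v \ K := fun h => (mem_erase.1 (mem_sdiff.1 h).1).1 rfl
  rw [sum_subtreesIn_eq_sum_rootedSubtreesIn_add f A v,
    sum_subtreesIn_eq_sum_rootedSubtreesIn_add f (insert v K) v,
    sum_subtreesIn_eq_sum_rootedSubtreesIn_add f (insert v (A.erase v \ K)) v,
    erase_insert hvK, erase_insert hvK',
    sum_subtreesIn_of_isClosedIn f hK hcl]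
  abel

theorem subtreeStats_glue (hv : v ∈ A) (hK : K ⊆ A.erase v) (hcl : IsClosedIn G K (A.erase v)) :
    subtreeStats G A v =
      (subtreeStats G (insert v K) v).glue (subtreeStats G (insert v (A.erase v \ K)) v) := by
  have hcard : ∀ p ∈ rootedSubtreesIn G (insert v K) v ×ˢ
      rootedSubtreesIn G (insert v (A.erase v \ K)) v, (#(p.1 ∪ p.2) : ℤ) = #p.1 + #p.2 - 1 := by
    rintro ⟨s₁, s₂⟩ hp
    simp only [mem_product, mem_rootedSubtreesIn] at hp
    obtain ⟨⟨hs₁A, -, hvs₁⟩, hs₂A, -, hvs₂⟩ := hp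
    have hinter : s₁ ∩ s₂ = {v} := by
      simp only [Finset.ext_iff, subset_iff, mem_inter, mem_insert, mem_sdiff, mem_erase,
        mem_singleton] at *
      grind
    have := card_union_add_card_inter s₁ s₂
    rw [hinter, card_singleton] at this
    dsimp only
    omega
  have hN := sum_subtreesIn_glue (G := G) (fun _ => (1 : ℤ)) hK hcl
  have hR := sum_subtreesIn_glue (G := G) (fun s => (#s : ℤ)) hK hcl
  have hNv := sum_rootedSubtreesIn_eq_sum_product (G := G) (fun _ => (1 : ℤ)) hv hK hcl
  have hRv := sum_rootedSubtreesIn_eq_sum_product (G := G) (fun s => (#s : ℤ)) hv hK hcl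
  rw [sum_congr rfl hcard, sum_product] at hRv
  rw [sum_product] at hNv
  simp only [sum_sub_distrib, sum_add_distrib, sum_const, ← mul_sum, nsmul_eq_mul,
    mul_one] at hN hRv hNv
  ext <;> simp only [subtreeStats, SubtreeStats.glue] <;> linarith

end Stats

theorem bounded_subtreeStats {G : SimpleGraph V} [DecidableEq V] (hG : G.IsAcyclic)
    {A : Finset V} (hA : IsSubtree G A) {v : V} (hv : v ∈ A) : (subtreeStats G A v).Bounded := by
  induction A using Finset.strongInduction generalizing v with
  | H A ih =>
  rcases (A.erase v).eq_empty_or_nonempty with hAv | hne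
  · obtain rfl : A = {v} := by rw [← insert_erase hv, hAv]; rfl
    rw [subtreeStats_singleton]
    exact SubtreeStats.bounded_vertex
  obtain ⟨u, hvu, p, hp⟩ := hA.exists_adj_walk_erase hv hne.choose_spec
  have hu : u ∈ A.erase v := hp u p.start_mem_support
  by_cases huniq : ∀ x ∈ A, G.Adj v x → x = u
  · rw [subtreeStats_of_forall_adj_eq hv hvu huniq]
    exact (ih _ (erase_ssubset hv) (hA.erase_of_forall_adj_eq hv huniq hne) hu).addRoot
  push Not at huniq
  obtain ⟨x, hxA, hvx, hxu⟩ := huniq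
  have hK : componentIn G (A.erase v) u ⊆ A.erase v := componentIn_subset
  have hcl := isClosedIn_componentIn (G := G) (S := A.erase v) (u := u)
  rw [subtreeStats_glue hv hK hcl]
  refine (ih _ ?_ (hA.insert_of_isClosedIn hv hK hcl) (mem_insert_self v _)).glue
    (ih _ ?_ (hA.insert_of_isClosedIn hv sdiff_subset hcl.sdiff) (mem_insert_self v _))
  · refine (ssubset_iff_of_subset (insert_subset hv (hK.trans (erase_subset v A)))).2
      ⟨x, hxA, ?_⟩
    simp [hvx.ne', notMem_componentIn_erase hG hvu hvx hxu]
  · refine (ssubset_iff_of_subset (insert_subset hv (sdiff_subset.trans (erase_subset v A)))).2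
      ⟨u, mem_of_mem_erase hu, ?_⟩
    simp [hvu.ne', self_mem_componentIn hu]

/-- for any tree `T` and vertex `v`,
`3(N_T R_v − N_v R_T) ≥ N_T² − N_v N_T`. -/
theorem three_mul_NR_sub_NR_ge
    [Fintype V] (G : SimpleGraph V) (hT : G.IsTree) (v : V) :
    3 * ((numSubtrees G : ℤ) * sumSubtreesAt G v
        - (numSubtreesAt G v : ℤ) * sumSubtrees G) ≥
      (numSubtrees G : ℤ) ^ 2 - (numSubtreesAt G v : ℤ) * numSubtrees G := by
  classical
  have hU : IsSubtree G univ := isSubtree_of_forall_walk (mem_univ v) fun z _ =>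
    ⟨(hT.connected.preconnected v z).some, fun _ _ => mem_univ _⟩
  have h := (bounded_subtreeStats hT.isAcyclic hU (mem_univ v)).key
  rw [subtreeStats_univ] at h
  dsimp only at h
  linarith
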